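/- arXiv:2407.04407 — 2 statements merged into one kernel-verified Lean document; each statement's English description precedes it below -/
import Mathlib

section
/- If Z_1, ..., Z_{n+1} are exchangeable real-valued random variables with almost surely no ties, then for any α ∈ (0,1), the probability that the rank (from smallest) of Z_{n+1} among all n+1 values exceeds ⌊(n+1)α⌋ is exactly (n+1−⌊(n+1)α⌋)/(n+1), which is at least 1−α. -/
open MeasureTheory ENNReal

def Exchangeable {Ω : Type*} [MeasurableSpace Ω] (μ : Measure Ω)
    {E : Type*} [MeasurableSpace E] {m : ℕ} (Z : Fin m → Ω → E) : Prop :=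
  ∀ σ : Equiv.Perm (Fin m),
    Measure.map (fun ω => fun i => Z (σ i) ω) μ = Measure.map (fun ω => fun i => Z i ω) μ

section Aux

variable {Ω : Type*} [MeasurableSpace Ω] {μ : Measure Ω} [IsProbabilityMeasure μ]
  {n : ℕ} {Z : Fin (n + 1) → Ω → ℝ}

/-- The rank (from smallest) of index `j`. -/
noncomputable def rk (Z : Fin (n + 1) → Ω → ℝ) (j : Fin (n + 1)) (ω : Ω) : ℕ :=
  (Finset.univ.filter fun i : Fin (n + 1) => Z i ω ≤ Z j ω).card

lemma measurable_rk (hmeas : ∀ i, Measurable (Z i)) (j : Fin (n + 1)) :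
    Measurable (rk Z j) := by
  have : rk Z j = fun ω => ∑ i : Fin (n + 1), if Z i ω ≤ Z j ω then 1 else 0 := by
    funext ω; exact Finset.card_filter _ _
  rw [this]
  exact Finset.measurable_sum _ fun i _ =>
    Measurable.ite (measurableSet_le (hmeas i) (hmeas j)) measurable_const measurable_const

lemma rk_dist_eq (hmeas : ∀ i, Measurable (Z i)) (hexch : Exchangeable μ Z)
    (j : Fin (n + 1)) (k : ℕ) :
    μ {ω | rk Z j ω = k} = μ {ω | rk Z (Fin.last n) ω = k} := by
  classical
  set σ : Equiv.Perm (Fin (n + 1)) := Equiv.swap j (Fin.last n) with hσ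
  set F : (Fin (n + 1) → ℝ) → ℕ :=
    fun x => (Finset.univ.filter fun i : Fin (n + 1) => x i ≤ x (Fin.last n)).card with hF
  have hFmeas : Measurable F := by
    have : F = fun x => ∑ i : Fin (n + 1), if x i ≤ x (Fin.last n) then 1 else 0 := by
      funext x; exact Finset.card_filter _ _
    rw [this]
    exact Finset.measurable_sum _ fun i _ =>
      Measurable.ite (measurableSet_le (measurable_pi_apply i) (measurable_pi_apply _))
        measurable_const measurable_const
  have hset : MeasurableSet {x : Fin (n + 1) → ℝ | F x = k} :=
    hFmeas (measurableSet_singleton k)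
  have hZσ : Measurable fun ω => fun i => Z (σ i) ω :=
    measurable_pi_lambda _ fun i => hmeas (σ i)
  have hZ : Measurable fun ω => fun i => Z i ω :=
    measurable_pi_lambda _ fun i => hmeas i
  have h1 : μ {ω | F (fun i => Z (σ i) ω) = k} = μ {ω | F (fun i => Z i ω) = k} := by
    have := congrArg (fun m : Measure (Fin (n + 1) → ℝ) => m {x | F x = k}) (hexch σ)
    simpa [Measure.map_apply hZσ hset, Measure.map_apply hZ hset, Set.preimage] using this
  have key : ∀ ω, F (fun i => Z (σ i) ω) = rk Z j ω := by
    intro ω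
    have hlast : σ (Fin.last n) = j := Equiv.swap_apply_right _ _
    show (Finset.univ.filter fun i : Fin (n + 1) => Z (σ i) ω ≤ Z (σ (Fin.last n)) ω).card
        = rk Z j ω
    rw [hlast]
    unfold rk
    apply Finset.card_bij (fun i _ => σ i)
    · intro a ha; simp only [Finset.mem_filter, Finset.mem_univ, true_and] at ha ⊢; exact ha
    · intro a _ b _ hab; exact σ.injective hab
    · intro b hb
      refine ⟨σ.symm b, ?_, by simp⟩
      simp only [Finset.mem_filter, Finset.mem_univ, true_and, Equiv.apply_symm_apply] at hb ⊢
      exact hb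
  have hsets : {ω | rk Z j ω = k} = {ω | F (fun i => Z (σ i) ω) = k} := by
    ext ω; simp only [Set.mem_setOf_eq, key ω]
  rw [hsets, h1]
  rfl

lemma rk_lt_of_lt {ω : Ω} {j j' : Fin (n + 1)} (h : Z j ω < Z j' ω) :
    rk Z j ω < rk Z j' ω := by
  classical
  apply Finset.card_lt_card
  constructor
  · intro i hi
    simp only [Finset.mem_filter, Finset.mem_univ, true_and] at hi ⊢
    exact hi.trans h.le
  · intro hsub
    have hj' : j' ∈ Finset.univ.filter fun i : Fin (n + 1) => Z i ω ≤ Z j' ω := by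
      simp
    have := hsub hj'
    simp only [Finset.mem_filter, Finset.mem_univ, true_and] at this
    exact absurd (lt_of_le_of_lt this h) (lt_irrefl _)

lemma rk_injective {ω : Ω} (hω : ∀ i j : Fin (n + 1), i ≠ j → Z i ω ≠ Z j ω) :
    Function.Injective fun j => rk Z j ω := by
  intro j j' h
  by_contra hne
  rcases lt_or_gt_of_ne (hω j j' hne) with hlt | hgt
  · exact absurd h (Nat.ne_of_lt (rk_lt_of_lt hlt))
  · exact absurd h.symm (Nat.ne_of_lt (rk_lt_of_lt hgt))

lemma rk_mem_Icc (ω : Ω) (j : Fin (n + 1)) : rk Z j ω ∈ Finset.Icc 1 (n + 1) := by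
  classical
  simp only [Finset.mem_Icc]
  constructor
  · have : j ∈ Finset.univ.filter fun i : Fin (n + 1) => Z i ω ≤ Z j ω := by simp
    exact Finset.card_pos.mpr ⟨j, this⟩
  · simpa [rk] using (Finset.card_filter_le Finset.univ fun i : Fin (n + 1) => Z i ω ≤ Z j ω)

lemma rk_surj {ω : Ω} (hω : ∀ i j : Fin (n + 1), i ≠ j → Z i ω ≠ Z j ω)
    {k : ℕ} (hk : k ∈ Finset.Icc 1 (n + 1)) : ∃ j, rk Z j ω = k := by
  classical
  have himg : Finset.univ.image (fun j => rk Z j ω) ⊆ Finset.Icc 1 (n + 1) := by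
    intro x hx
    simp only [Finset.mem_image, Finset.mem_univ, true_and] at hx
    obtain ⟨j, rfl⟩ := hx
    exact rk_mem_Icc ω j
  have hcard : (Finset.Icc 1 (n + 1)).card ≤ (Finset.univ.image fun j => rk Z j ω).card := by
    rw [Finset.card_image_of_injective _ (rk_injective hω)]
    simp [Nat.card_Icc]
  have heq := Finset.eq_of_subset_of_card_le himg hcard
  rw [← heq] at hk
  simp only [Finset.mem_image, Finset.mem_univ, true_and] at hk
  exact hk

lemma measure_rk_eq (hmeas : ∀ i, Measurable (Z i)) (hexch : Exchangeable μ Z)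
    (hdistinct : μ {ω | ∀ i j : Fin (n + 1), i ≠ j → Z i ω ≠ Z j ω} = 1)
    {k : ℕ} (hk : k ∈ Finset.Icc 1 (n + 1)) :
    μ {ω | rk Z (Fin.last n) ω = k} = ((n : ℝ≥0∞) + 1)⁻¹ := by
  classical
  set E : Set Ω := {ω | ∀ i j : Fin (n + 1), i ≠ j → Z i ω ≠ Z j ω} with hE
  have hEmeas : MeasurableSet E := by
    have : E = ⋂ (i : Fin (n + 1)) (j : Fin (n + 1)) (_ : i ≠ j), {ω | Z i ω ≠ Z j ω} := by
      ext ω; simp [hE]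
    rw [this]
    exact MeasurableSet.iInter fun i => MeasurableSet.iInter fun j =>
      MeasurableSet.iInter fun _ => (measurableSet_eq_fun (hmeas i) (hmeas j)).compl
  have hEc : μ Eᶜ = 0 := (prob_compl_eq_zero_iff (μ := μ) hEmeas).mpr hdistinct
  set B : Fin (n + 1) → Set Ω := fun j => {ω | rk Z j ω = k} ∩ E with hB
  have hBmeas : ∀ j, MeasurableSet (B j) := fun j =>
    ((measurable_rk hmeas j) (measurableSet_singleton k)).inter hEmeas
  have hdisj : ((Finset.univ : Finset (Fin (n + 1))) : Set (Fin (n + 1))).PairwiseDisjoint B := by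
    intro j _ j' _ hne
    simp only [Function.onFun, Set.disjoint_left]
    intro ω hω hω'
    obtain ⟨hj, hEω⟩ := hω
    obtain ⟨hj', _⟩ := hω'
    exact hne (rk_injective hEω (hj.trans hj'.symm))
  have hcover : (⋃ j ∈ (Finset.univ : Finset (Fin (n + 1))), B j) = E := by
    ext ω
    simp only [Set.mem_iUnion, hB, Set.mem_inter_iff, Set.mem_setOf_eq, Finset.mem_univ,
      exists_prop, true_and, exists_true_left]
    constructor
    · rintro ⟨j, _, hEω⟩; exact hEω
    · intro hEω
      obtain ⟨j, hj⟩ := rk_surj hEω hk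
      exact ⟨j, hj, hEω⟩
  have hsum : ∑ j : Fin (n + 1), μ (B j) = 1 := by
    rw [← measure_biUnion_finset hdisj fun j _ => hBmeas j, hcover]
    exact hdistinct
  have hBj : ∀ j, μ (B j) = μ {ω | rk Z (Fin.last n) ω = k} := by
    intro j
    rw [hB]
    simp only
    rw [measure_inter_conull hEc]
    exact rk_dist_eq hmeas hexch j k
  rw [Finset.sum_congr rfl fun j _ => hBj j, Finset.sum_const, Finset.card_univ,
    Fintype.card_fin] at hsum
  have hne : ((n : ℝ≥0∞) + 1) ≠ 0 := by simp
  have hnetop : ((n : ℝ≥0∞) + 1) ≠ ⊤ := by simp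
  rw [nsmul_eq_mul, Nat.cast_add, Nat.cast_one] at hsum
  have : ((n : ℝ≥0∞) + 1) * μ {ω | rk Z (Fin.last n) ω = k} = 1 := hsum
  calc μ {ω | rk Z (Fin.last n) ω = k}
      = ((n : ℝ≥0∞) + 1)⁻¹ * (((n : ℝ≥0∞) + 1) * μ {ω | rk Z (Fin.last n) ω = k}) := by
        rw [← mul_assoc, ENNReal.inv_mul_cancel hne hnetop, one_mul]
    _ = ((n : ℝ≥0∞) + 1)⁻¹ := by rw [this, mul_one]

end Aux

/-- For exchangeable, a.s. tie-free `Z_1,…,Z_{n+1}`, the probability that the rank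
(from smallest, i.e. the number of indices `i` with `Z i ≤ Z_{n+1}`) of `Z_{n+1}`
exceeds `⌊(n+1)α⌋` is exactly `(n+1-⌊(n+1)α⌋)/(n+1)`, which is at least `1-α`. -/
theorem rank_exceeds_floor {Ω : Type*} [MeasurableSpace Ω] (μ : Measure Ω)
    [IsProbabilityMeasure μ]
    (n : ℕ) (Z : Fin (n + 1) → Ω → ℝ)
    (hmeas : ∀ i, Measurable (Z i))
    (hexch : Exchangeable μ Z)
    (hdistinct : μ {ω | ∀ i j : Fin (n + 1), i ≠ j → Z i ω ≠ Z j ω} = 1)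
    (α : ℝ) (hα : α ∈ Set.Ioo (0 : ℝ) 1) :
    μ {ω | ⌊((n : ℝ) + 1) * α⌋₊ <
        (Finset.univ.filter fun i : Fin (n + 1) => Z i ω ≤ Z (Fin.last n) ω).card}
      = (((n + 1 - ⌊((n : ℝ) + 1) * α⌋₊ : ℕ) : ℝ≥0∞)) / ((n : ℝ≥0∞) + 1)
    ∧ ((((n + 1 - ⌊((n : ℝ) + 1) * α⌋₊ : ℕ) : ℝ≥0∞)) / ((n : ℝ≥0∞) + 1)
        ≥ ENNReal.ofReal (1 - α)) := by
  classical
  obtain ⟨hα0, hα1⟩ := hα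
  set m := ⌊((n : ℝ) + 1) * α⌋₊ with hm
  have hmle : (m : ℝ) ≤ ((n : ℝ) + 1) * α :=
    Nat.floor_le (by positivity)
  have hmlt : m < n + 1 := by
    have h1 : ((n : ℝ) + 1) * α < (n : ℝ) + 1 := by nlinarith
    have h2 : (m : ℝ) < ((n + 1 : ℕ) : ℝ) := by push_cast; linarith [hmle]
    exact_mod_cast h2
  constructor
  · -- exact probability
    have hsplit : {ω | m < (Finset.univ.filter fun i : Fin (n + 1) =>
          Z i ω ≤ Z (Fin.last n) ω).card}
        = ⋃ k ∈ Finset.Ioc m (n + 1), {ω | rk Z (Fin.last n) ω = k} := by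
      ext ω
      simp only [Set.mem_setOf_eq, Set.mem_iUnion, Finset.mem_Ioc, exists_prop]
      constructor
      · intro h
        refine ⟨rk Z (Fin.last n) ω, ⟨h, ?_⟩, rfl⟩
        have := rk_mem_Icc (Z := Z) ω (Fin.last n)
        simp only [Finset.mem_Icc] at this
        exact this.2
      · rintro ⟨k, ⟨hk1, _⟩, hk⟩
        show m < rk Z (Fin.last n) ω
        rw [hk]; exact hk1
    rw [hsplit]
    have hdisj : (Finset.Ioc m (n + 1) : Set ℕ).PairwiseDisjoint
        fun k => {ω | rk Z (Fin.last n) ω = k} := by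
      intro k _ k' _ hne
      simp only [Function.onFun, Set.disjoint_left, Set.mem_setOf_eq]
      intro ω h h'
      exact hne (h.symm.trans h')
    rw [measure_biUnion_finset hdisj fun k _ =>
      (measurable_rk hmeas (Fin.last n)) (measurableSet_singleton k)]
    have hterm : ∀ k ∈ Finset.Ioc m (n + 1),
        μ {ω | rk Z (Fin.last n) ω = k} = ((n : ℝ≥0∞) + 1)⁻¹ := by
      intro k hk
      simp only [Finset.mem_Ioc] at hk
      exact measure_rk_eq hmeas hexch hdistinct
        (Finset.mem_Icc.mpr ⟨Nat.one_le_iff_ne_zero.mpr (by omega), hk.2⟩)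
    rw [Finset.sum_congr rfl hterm, Finset.sum_const, Nat.card_Ioc, nsmul_eq_mul]
    rw [ENNReal.div_eq_inv_mul, mul_comm]
  · -- inequality
    have hreal : 1 - α ≤ ((n + 1 - m : ℕ) : ℝ) / ((n : ℝ) + 1) := by
      have hcast : ((n + 1 - m : ℕ) : ℝ) = (n : ℝ) + 1 - (m : ℝ) := by
        rw [Nat.cast_sub (le_of_lt hmlt)]; push_cast; ring
      rw [hcast, le_div_iff₀ (by positivity)]
      nlinarith
    have hpos : (0 : ℝ) < (n : ℝ) + 1 := by positivity
    show ENNReal.ofReal (1 - α) ≤ _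
    calc ENNReal.ofReal (1 - α)
        ≤ ENNReal.ofReal (((n + 1 - m : ℕ) : ℝ) / ((n : ℝ) + 1)) :=
          ENNReal.ofReal_le_ofReal hreal
      _ = ENNReal.ofReal ((n + 1 - m : ℕ) : ℝ) / ENNReal.ofReal ((n : ℝ) + 1) :=
          ENNReal.ofReal_div_of_pos hpos
      _ = (((n + 1 - m : ℕ) : ℝ≥0∞)) / ((n : ℝ≥0∞) + 1) := by
          rw [ENNReal.ofReal_natCast]
          congr 1
          rw [ENNReal.ofReal_add (by positivity) zero_le_one, ENNReal.ofReal_natCast,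
            ENNReal.ofReal_one]
end

section
/- Let c_1, ..., c_{n+1} be exchangeable real random variables with almost surely no ties, and let Q̂_α denote the ⌊(n+1)α⌋-th largest value among c_1, ..., c_n. Then P(c_{n+1} < Q̂_α) ≥ 1 − α, provided ⌊(n+1)α⌋ ≥ 1. -/
open MeasureTheory ENNReal

/-- The `k`-th largest value of `f 0, …, f (n-1)` (1-indexed). -/
noncomputable def kthLargest {n : ℕ} (f : Fin n → ℝ) (k : ℕ) : ℝ :=
  (List.insertionSort (· ≥ ·) (List.ofFn f)).getD (k - 1) 0

/-! ### Auxiliary lemmas -/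



lemma countP_ofFn_eq {n : ℕ} (f : Fin n → ℝ) (p : ℝ → Bool) :
    (List.ofFn f).countP p = (Finset.univ.filter (fun i => p (f i) = true)).card := by
  induction n with
  | zero => simp
  | succ m ih =>
    rw [List.ofFn_succ, List.countP_cons, ih, Finset.card_filter, Finset.card_filter,
      Fin.sum_univ_succ]
    by_cases h : p (f 0) = true <;> simp [h, add_comm, Function.comp]

lemma lt_kthLargest_iff {n : ℕ} (f : Fin n → ℝ) {k : ℕ} (hk1 : 1 ≤ k) (hkn : k ≤ n) (x : ℝ) :
    x < kthLargest f k ↔ k ≤ (Finset.univ.filter (fun i => x < f i)).card := by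
  set L := List.insertionSort (· ≥ ·) (List.ofFn f) with hL
  have hlen : L.length = n := by simp [hL]
  have hsorted : L.Pairwise (· ≥ ·) := List.pairwise_insertionSort _ _
  have hperm : L.Perm (List.ofFn f) := List.perm_insertionSort _ _
  have hidx : k - 1 < L.length := by omega
  have hget : kthLargest f k = L[k-1] := List.getD_eq_getElem L 0 hidx
  have hmono : ∀ i j (hi : i < L.length) (hj : j < L.length), i ≤ j → L[j] ≤ L[i] := by
    intro i j hi hj hij
    rcases eq_or_lt_of_le hij with rfl | h
    · exact le_refl _
    · exact List.pairwise_iff_getElem.mp hsorted i j hi hj h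
  have hcount : (Finset.univ.filter (fun i => x < f i)).card
      = L.countP (fun a => decide (x < a)) := by
    rw [hperm.countP_eq, countP_ofFn_eq]
    simp
  rw [hget, hcount]
  constructor
  · intro h
    have h1 : (L.take k).length = k := by simp [hlen]; omega
    have h2 : (L.take k).countP (fun a => decide (x < a)) = (L.take k).length := by
      rw [List.countP_eq_length]
      intro a ha
      obtain ⟨i, hi, rfl⟩ := List.mem_iff_getElem.mp ha
      have hik : i < k := by simp [hlen] at hi; omega
      rw [List.getElem_take]
      simp only [decide_eq_true_eq]
      exact lt_of_lt_of_le h (hmono i (k-1) (by omega) hidx (by omega))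
    calc k = (L.take k).countP (fun a => decide (x < a)) := by rw [h2, h1]
    _ ≤ L.countP (fun a => decide (x < a)) := (List.take_sublist _ _).countP_le
  · intro h
    by_contra h'
    push_neg at h'
    have h1 : (L.drop (k-1)).length = n - (k-1) := by simp [hlen]
    have h2 : (L.drop (k-1)).countP (fun a => !decide (x < a)) = (L.drop (k-1)).length := by
      rw [List.countP_eq_length]
      intro a ha
      obtain ⟨i, hi, rfl⟩ := List.mem_iff_getElem.mp ha
      rw [List.getElem_drop]
      simp only [Bool.not_eq_true', decide_eq_false_iff_not, not_lt]
      exact le_trans (hmono (k-1) ((k-1)+i) hidx (by rw [h1] at hi; omega) (by omega)) h'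
    have h3 : n - (k-1) ≤ L.countP (fun a => !decide (x < a)) := by
      calc n - (k-1) = (L.drop (k-1)).countP (fun a => !decide (x < a)) := by rw [h2, h1]
      _ ≤ _ := (List.drop_sublist _ _).countP_le
    have h4 := List.length_eq_countP_add_countP (fun a => decide (x < a)) (l := L)
    have h5 : L.countP (fun a => decide ¬(decide (x < a) = true))
        = L.countP (fun a => !decide (x < a)) := by
      congr 1
      funext a
      by_cases hxa : x < a <;> simp [hxa]
    rw [h5, hlen] at h4
    omega

noncomputable def Ncount {m : ℕ} (v : Fin m → ℝ) (j : Fin m) : ℕ :=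
  (Finset.univ.filter fun i => v j < v i).card

lemma Ncount_lt_Ncount {m : ℕ} {v : Fin m → ℝ} {j j' : Fin m} (h : v j < v j') :
    Ncount v j' < Ncount v j := by
  apply Finset.card_lt_card
  constructor
  · intro i hi
    simp only [Finset.mem_filter, Finset.mem_univ, true_and] at hi ⊢
    exact h.trans hi
  · intro hsub
    have := hsub (by simp [Finset.mem_filter, h] : j' ∈ Finset.univ.filter fun i => v j < v i)
    simp only [Finset.mem_filter, Finset.mem_univ, true_and] at this
    exact lt_irrefl _ this

lemma Ncount_inj {m : ℕ} {v : Fin m → ℝ} (hv : ∀ i j, i ≠ j → v i ≠ v j) :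
    Function.Injective (Ncount v) := by
  intro j j' heq
  by_contra hne
  rcases lt_trichotomy (v j) (v j') with h | h | h
  · exact absurd heq (Ncount_lt_Ncount h).ne'
  · exact hv j j' hne h
  · exact absurd heq (Ncount_lt_Ncount h).ne

lemma Ncount_le {m : ℕ} (v : Fin (m+1) → ℝ) (j : Fin (m+1)) : Ncount v j ≤ m := by
  have : (Finset.univ.filter fun i => v j < v i) ⊆ Finset.univ.erase j := by
    intro i hi
    simp only [Finset.mem_filter, Finset.mem_univ, true_and] at hi
    simp only [Finset.mem_erase, Finset.mem_univ, and_true]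
    rintro rfl; exact lt_irrefl _ hi
  calc Ncount v j ≤ (Finset.univ.erase j).card := Finset.card_le_card this
  _ = m := by rw [Finset.card_erase_of_mem (Finset.mem_univ _)]; simp

lemma Ncount_surj {m : ℕ} {v : Fin (m+1) → ℝ} (hv : ∀ i j, i ≠ j → v i ≠ v j)
    {r : ℕ} (hr : r ≤ m) : ∃ j, Ncount v j = r := by
  let g : Fin (m+1) → Fin (m+1) := fun j => ⟨Ncount v j, Nat.lt_succ_of_le (Ncount_le v j)⟩
  have hginj : Function.Injective g := by
    intro a b hab
    exact Ncount_inj hv (by simpa [g, Fin.ext_iff] using hab)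
  obtain ⟨j, hj⟩ := Finite.injective_iff_surjective.mp hginj ⟨r, Nat.lt_succ_of_le hr⟩
  exact ⟨j, by simpa [g, Fin.ext_iff] using hj⟩

lemma card_filter_comp_equiv {m : ℕ} (σ : Equiv.Perm (Fin m)) (P : Fin m → Prop)
    [DecidablePred P] :
    (Finset.univ.filter fun i => P (σ i)).card = (Finset.univ.filter P).card := by
  apply Finset.card_bij (fun a _ => σ a)
  · intro a ha; simp only [Finset.mem_filter, Finset.mem_univ, true_and] at ha ⊢; exact ha
  · intro a _ b _ h; exact σ.injective h
  · intro b hb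
    refine ⟨σ.symm b, ?_, by simp⟩
    simp only [Finset.mem_filter, Finset.mem_univ, true_and] at hb ⊢
    simpa using hb

lemma Ncount_comp_equiv {m : ℕ} (σ : Equiv.Perm (Fin m)) (v : Fin m → ℝ) (j : Fin m) :
    Ncount (v ∘ σ) j = Ncount v (σ j) := by
  unfold Ncount
  exact card_filter_comp_equiv σ (fun i => v (σ j) < v i)

lemma distinct_comp_equiv {m : ℕ} (σ : Equiv.Perm (Fin m)) (v : Fin m → ℝ) :
    (∀ i j, i ≠ j → (v ∘ σ) i ≠ (v ∘ σ) j) ↔ (∀ i j, i ≠ j → v i ≠ v j) := by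
  constructor
  · intro h i j hij
    have := h (σ.symm i) (σ.symm j) (fun e => hij (by simpa using congrArg σ e))
    simpa using this
  · intro h i j hij
    exact h _ _ (fun e => hij (σ.injective e))

lemma measurable_Ncount {m : ℕ} (j : Fin m) :
    Measurable (fun v : Fin m → ℝ => Ncount v j) := by
  have : (fun v : Fin m → ℝ => Ncount v j)
      = fun v => ∑ i : Fin m, if v j < v i then 1 else 0 := by
    funext v; exact Finset.card_filter _ _
  rw [this]
  exact Finset.measurable_sum _ fun i _ =>
    Measurable.ite (measurableSet_lt (measurable_pi_apply j) (measurable_pi_apply i))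
      measurable_const measurable_const

lemma card_filter_castSucc {n : ℕ} (P : Fin (n+1) → Prop) [DecidablePred P]
    (h : ¬ P (Fin.last n)) :
    (Finset.univ.filter P).card = (Finset.univ.filter (fun i : Fin n => P i.castSucc)).card := by
  rw [Fin.univ_castSuccEmb, Finset.filter_cons, if_neg h, Finset.filter_map, Finset.card_map]
  rfl

/-- Split conformal coverage: for exchangeable, a.s. tie-free scores `c_1,…,c_{n+1}`,
with `Q̂_α` the `⌊(n+1)α⌋`-th largest among the calibration scores `c_1,…,c_n`,
we have `P(c_{n+1} < Q̂_α) ≥ 1 - α`. -/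
theorem split_conformal_coverage {Ω : Type*} [MeasurableSpace Ω] (μ : Measure Ω)
    [IsProbabilityMeasure μ]
    (n : ℕ) (c : Fin (n + 1) → Ω → ℝ)
    (hmeas : ∀ i, Measurable (c i))
    (hexch : Exchangeable μ c)
    (hdistinct : μ {ω | ∀ i j : Fin (n + 1), i ≠ j → c i ω ≠ c j ω} = 1)
    (α : ℝ) (hα : α ∈ Set.Ioo (0 : ℝ) 1)
    (hfloor : 1 ≤ ⌊((n : ℝ) + 1) * α⌋₊) :
    μ {ω | c (Fin.last n) ω <
        kthLargest (fun i : Fin n => c i.castSucc ω) ⌊((n : ℝ) + 1) * α⌋₊}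
      ≥ ENNReal.ofReal (1 - α) := by
  obtain ⟨hα0, hα1⟩ := hα
  set k := ⌊((n : ℝ) + 1) * α⌋₊ with hkdef
  have hnpos : (0:ℝ) < (n:ℝ) + 1 := by positivity
  have hkle : (k : ℝ) ≤ ((n:ℝ)+1) * α := Nat.floor_le (by positivity)
  have hkn : k ≤ n := by
    have h1 : ((n:ℝ)+1) * α < ((n:ℝ)+1) := by nlinarith
    have h2 : k < n + 1 := by
      rw [hkdef]
      apply Nat.floor_lt (by positivity) |>.mpr
      push_cast
      linarith
    omega
  set J : Ω → (Fin (n+1) → ℝ) := fun ω i => c i ω with hJdef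
  have hJ : Measurable J := measurable_pi_lambda _ hmeas
  set Ddist : Set (Fin (n+1) → ℝ) := {v | ∀ i j, i ≠ j → v i ≠ v j} with hDdef
  have hDmeas : MeasurableSet Ddist := by
    have hEq : Ddist = ⋂ (i) (j) (_ : i ≠ j), {v : Fin (n+1) → ℝ | v i ≠ v j} := by
      ext v
      simp only [hDdef, Set.mem_setOf_eq, Set.mem_iInter]
    rw [hEq]
    refine MeasurableSet.iInter fun i => MeasurableSet.iInter fun j =>
      MeasurableSet.iInter fun _ => ?_
    exact (measurableSet_eq_fun (measurable_pi_apply i) (measurable_pi_apply j)).compl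
  set T : Fin (n+1) → ℕ → Set (Fin (n+1) → ℝ) :=
    fun j r => {v | Ncount v j = r} ∩ Ddist with hTdef
  have hTmeas : ∀ j r, MeasurableSet (T j r) := fun j r =>
    ((measurable_Ncount j) (measurableSet_singleton r)).inter hDmeas
  have key : ∀ (j : Fin (n+1)) (r : ℕ),
      μ (J ⁻¹' T j r) = μ (J ⁻¹' T (Fin.last n) r) := by
    intro j r
    set σ := Equiv.swap j (Fin.last n) with hσ
    have hJσ : Measurable (fun ω => fun i => c (σ i) ω) :=
      measurable_pi_lambda _ fun i => hmeas (σ i)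
    have hset : (fun ω => fun i => c (σ i) ω) ⁻¹' T (Fin.last n) r = J ⁻¹' T j r := by
      ext ω
      simp only [Set.mem_preimage, hTdef, Set.mem_inter_iff, Set.mem_setOf_eq]
      have h1 : Ncount ((J ω) ∘ σ) (Fin.last n) = Ncount (J ω) j := by
        rw [Ncount_comp_equiv, Equiv.swap_apply_right]
      have h2 : (∀ i j', i ≠ j' → ((J ω) ∘ σ) i ≠ ((J ω) ∘ σ) j')
          ↔ (∀ i j', i ≠ j' → (J ω) i ≠ (J ω) j') := distinct_comp_equiv σ (J ω)
      exact and_congr (by rw [show (fun i => c (σ i) ω) = (J ω) ∘ σ from rfl, h1]) h2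
    calc μ (J ⁻¹' T j r)
        = μ ((fun ω => fun i => c (σ i) ω) ⁻¹' T (Fin.last n) r) := by rw [hset]
    _ = Measure.map (fun ω => fun i => c (σ i) ω) μ (T (Fin.last n) r) :=
        (Measure.map_apply hJσ (hTmeas _ _)).symm
    _ = Measure.map J μ (T (Fin.last n) r) := by rw [hexch σ]
    _ = μ (J ⁻¹' T (Fin.last n) r) := Measure.map_apply hJ (hTmeas _ _)
  have hμD : μ (J ⁻¹' Ddist) = 1 := hdistinct
  have hone : ∀ r, r ≤ n → μ (J ⁻¹' T (Fin.last n) r) = ((n:ℝ≥0∞)+1)⁻¹ := by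
    intro r hr
    have hdisj : Pairwise (Function.onFun Disjoint (fun j => J ⁻¹' T j r)) := by
      intro j j' hne
      rw [Function.onFun, Set.disjoint_left]
      intro ω h1 h2
      simp only [Set.mem_preimage, hTdef, Set.mem_inter_iff, Set.mem_setOf_eq] at h1 h2
      exact hne (Ncount_inj h1.2 (h1.1.trans h2.1.symm))
    have hunion : (⋃ j, J ⁻¹' T j r) = J ⁻¹' Ddist := by
      ext ω
      simp only [Set.mem_iUnion, Set.mem_preimage, hTdef, Set.mem_inter_iff, Set.mem_setOf_eq]
      constructor
      · rintro ⟨j, _, hD⟩; exact hD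
      · intro hD
        obtain ⟨j, hj⟩ := Ncount_surj hD hr
        exact ⟨j, hj, hD⟩
    have hsum : ∑' j : Fin (n+1), μ (J ⁻¹' T j r) = 1 := by
      rw [← measure_iUnion hdisj (fun j => hJ (hTmeas j r)), hunion, hμD]
    rw [tsum_fintype, Finset.sum_congr rfl (fun j _ => key j r), Finset.sum_const,
      Finset.card_univ, Fintype.card_fin, nsmul_eq_mul] at hsum
    have hne : ((n+1 : ℕ) : ℝ≥0∞) ≠ 0 := by simp
    have hnetop : ((n+1 : ℕ) : ℝ≥0∞) ≠ ⊤ := by simp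
    have : μ (J ⁻¹' T (Fin.last n) r) = ((n+1 : ℕ) : ℝ≥0∞)⁻¹ := by
      calc μ (J ⁻¹' T (Fin.last n) r)
          = ((n+1 : ℕ) : ℝ≥0∞)⁻¹ * (((n+1 : ℕ) : ℝ≥0∞) * μ (J ⁻¹' T (Fin.last n) r)) := by
            rw [← mul_assoc, ENNReal.inv_mul_cancel hne hnetop, one_mul]
      _ = ((n+1 : ℕ) : ℝ≥0∞)⁻¹ * 1 := by rw [hsum]
      _ = ((n+1 : ℕ) : ℝ≥0∞)⁻¹ := mul_one _
    rw [this]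
    congr 1
    push_cast
    ring
  have hsub : (⋃ r ∈ Finset.Icc k n, J ⁻¹' T (Fin.last n) r)
      ⊆ {ω | c (Fin.last n) ω < kthLargest (fun i : Fin n => c i.castSucc ω) k} := by
    intro ω hω
    simp only [Set.mem_iUnion, Set.mem_preimage, hTdef, Set.mem_inter_iff,
      Set.mem_setOf_eq, Finset.mem_Icc] at hω
    obtain ⟨r, ⟨hkr, hrn⟩, hN, hD⟩ := hω
    simp only [Set.mem_setOf_eq]
    rw [lt_kthLargest_iff _ hfloor hkn]
    have hcast : (Finset.univ.filter fun i : Fin (n+1) =>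
          c (Fin.last n) ω < c i ω).card
        = (Finset.univ.filter fun i : Fin n =>
          c (Fin.last n) ω < c i.castSucc ω).card :=
      card_filter_castSucc _ (lt_irrefl _)
    have hNval : Ncount (J ω) (Fin.last n) = r := hN
    unfold Ncount at hNval
    rw [← hcast]
    calc k ≤ r := hkr
    _ = _ := hNval.symm
  have hmain : μ {ω | c (Fin.last n) ω < kthLargest (fun i : Fin n => c i.castSucc ω) k}
      ≥ ((n+1-k : ℕ) : ℝ≥0∞) * ((n:ℝ≥0∞)+1)⁻¹ := by
    have hdisj2 : (↑(Finset.Icc k n) : Set ℕ).PairwiseDisjoint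
        (fun r => J ⁻¹' T (Fin.last n) r) := by
      intro r _ r' _ hne
      rw [Function.onFun, Set.disjoint_left]
      intro ω h1 h2
      simp only [Set.mem_preimage, hTdef, Set.mem_inter_iff, Set.mem_setOf_eq] at h1 h2
      exact hne (h1.1.symm.trans h2.1)
    calc μ {ω | c (Fin.last n) ω < kthLargest (fun i : Fin n => c i.castSucc ω) k}
        ≥ μ (⋃ r ∈ Finset.Icc k n, J ⁻¹' T (Fin.last n) r) := measure_mono hsub
    _ = ∑ r ∈ Finset.Icc k n, μ (J ⁻¹' T (Fin.last n) r) :=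
        measure_biUnion_finset hdisj2 (fun r _ => hJ (hTmeas _ r))
    _ = ∑ r ∈ Finset.Icc k n, ((n:ℝ≥0∞)+1)⁻¹ :=
        Finset.sum_congr rfl (fun r hr => hone r (Finset.mem_Icc.mp hr).2)
    _ = ((n+1-k : ℕ) : ℝ≥0∞) * ((n:ℝ≥0∞)+1)⁻¹ := by
        rw [Finset.sum_const, Nat.card_Icc, nsmul_eq_mul]
  refine le_trans ?_ hmain
  have hcastk : ((n+1-k : ℕ) : ℝ) = (n:ℝ) + 1 - k := by
    push_cast [Nat.cast_sub (by omega : k ≤ n+1)]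
    ring
  have hreal : 1 - α ≤ ((n+1-k : ℕ) : ℝ) * ((n:ℝ)+1)⁻¹ := by
    rw [hcastk, ← div_eq_mul_inv, le_div_iff₀ hnpos]
    nlinarith
  calc ENNReal.ofReal (1 - α)
      ≤ ENNReal.ofReal (((n+1-k : ℕ) : ℝ) * ((n:ℝ)+1)⁻¹) := ENNReal.ofReal_le_ofReal hreal
  _ = ((n+1-k : ℕ) : ℝ≥0∞) * ((n:ℝ≥0∞)+1)⁻¹ := by
      rw [ENNReal.ofReal_mul (by positivity), ENNReal.ofReal_natCast,
        ENNReal.ofReal_inv_of_pos hnpos]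
      congr 1
      rw [ENNReal.ofReal_add (by positivity) (by norm_num), ENNReal.ofReal_natCast,
        ENNReal.ofReal_one]
end
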